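/- arXiv:1704.00029 — 2 statements merged into one kernel-verified Lean document; each statement's English description precedes it below -/
import Mathlib

section
/- Suppose ω ≥ 1.1 and 0 < α ≤ 2. Then for every integer k ≥ 2, (1 - ω/α)² + 2(ω/α)(1 - sin ω) < (1 - kω/α)² + 2k(ω/α)(1 - sin(kω)). -/
open Real

/-- sin x ≤ x for 0 ≤ x -/
lemma sin_le_self' {x : ℝ} (hx : 0 ≤ x) : Real.sin x ≤ x := by
  rcases eq_or_lt_of_le hx with h | h
  · simp [← h]
  · exact (Real.sin_lt h).le

/-- sin is nonpositive on [π, 2π] -/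
lemma sin_nonpos_of_pi_le {y : ℝ} (h1 : π ≤ y) (h2 : y ≤ 2 * π) : Real.sin y ≤ 0 := by
  have : Real.sin y = -Real.sin (y - π) := by
    rw [← Real.sin_add_pi (y - π)]; ring_nf
  rw [this]
  have : 0 ≤ Real.sin (y - π) :=
    Real.sin_nonneg_of_nonneg_of_le_pi (by linarith) (by linarith)
  linarith

lemma sin_ge_pi_sub {y : ℝ} (h1 : π ≤ y) : π - y ≤ Real.sin y := by
  have e : Real.sin y = -Real.sin (y - π) := by
    rw [← Real.sin_add_pi (y - π)]; ring_nf
  have := sin_le_self' (x := y - π) (by linarith)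
  rw [e]; linarith

-- numeric bounds
lemma s275_lb : (0.2712 : ℝ) ≤ Real.sin 0.275 := by
  have h := Real.sin_bound (x := 0.275) (by rw [show |(0.275:ℝ)| = 0.275 by norm_num]; norm_num)
  rw [show |(0.275:ℝ)| = 0.275 by norm_num, abs_le] at h
  obtain ⟨h1, h2⟩ := h
  norm_num at h1 h2 ⊢
  linarith

lemma c275_lb : (0.9618 : ℝ) ≤ Real.cos 0.275 := by
  have h := Real.cos_bound (x := 0.275) (by rw [show |(0.275:ℝ)| = 0.275 by norm_num]; norm_num)
  rw [show |(0.275:ℝ)| = 0.275 by norm_num, abs_le] at h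
  obtain ⟨h1, h2⟩ := h
  norm_num at h1 h2 ⊢
  linarith

lemma s055_lb : (0.5216 : ℝ) ≤ Real.sin 0.55 := by
  have e : Real.sin 0.55 = 2 * Real.sin 0.275 * Real.cos 0.275 := by
    rw [← Real.sin_two_mul]; norm_num
  nlinarith [s275_lb, c275_lb]

lemma c11_ub : Real.cos 1.1 ≤ 0.4559 := by
  have e : Real.cos 1.1 = 1 - 2 * Real.sin 0.55 ^ 2 := by
    have := Real.cos_two_mul 0.55
    have h2 := Real.sin_sq_add_cos_sq (0.55 : ℝ)
    have : Real.cos (2 * 0.55) = 2 * Real.cos 0.55 ^ 2 - 1 := this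
    nlinarith [this]
  nlinarith [s055_lb]

lemma s06_bounds : (0.5572 : ℝ) ≤ Real.sin 0.6 ∧ Real.sin 0.6 ≤ 0.5708 := by
  have h := Real.sin_bound (x := 0.6) (by rw [show |(0.6:ℝ)| = 0.6 by norm_num]; norm_num)
  rw [show |(0.6:ℝ)| = 0.6 by norm_num, abs_le] at h
  obtain ⟨h1, h2⟩ := h
  norm_num at h1 h2 ⊢
  constructor <;> linarith

lemma c06_bounds : (0.8132 : ℝ) ≤ Real.cos 0.6 ∧ Real.cos 0.6 ≤ 0.8268 := by
  have h := Real.cos_bound (x := 0.6) (by rw [show |(0.6:ℝ)| = 0.6 by norm_num]; norm_num)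
  rw [show |(0.6:ℝ)| = 0.6 by norm_num, abs_le] at h
  obtain ⟨h1, h2⟩ := h
  norm_num at h1 h2 ⊢
  constructor <;> linarith

lemma c12_ub : Real.cos 1.2 ≤ 0.3791 := by
  have e : Real.cos 1.2 = 1 - 2 * Real.sin 0.6 ^ 2 := by
    have h1 : Real.cos (2 * 0.6) = 2 * Real.cos 0.6 ^ 2 - 1 := Real.cos_two_mul 0.6
    have h2 := Real.sin_sq_add_cos_sq (0.6 : ℝ)
    nlinarith [h1]
  nlinarith [s06_bounds.1]

lemma s12_ub : Real.sin 1.2 ≤ 0.9439 := by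
  have e : Real.sin 1.2 = 2 * Real.sin 0.6 * Real.cos 0.6 := by
    rw [← Real.sin_two_mul]; norm_num
  nlinarith [s06_bounds.1, s06_bounds.2, c06_bounds.1, c06_bounds.2]

lemma key2 (ω : ℝ) (hω : 1.1 ≤ ω) :
    0 < 3 * (ω / 2) + 2 * Real.sin ω - 2 * 2 * Real.sin (2 * ω) := by
  have hpi1 := Real.pi_gt_d6
  have hpi2 := Real.pi_lt_d2
  rcases le_or_gt 4.1 ω with h41 | h41
  · have h1 := Real.neg_one_le_sin ω
    have h2 := Real.sin_le_one (2 * ω)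
    linarith
  rcases le_or_gt π ω with hpi | hpi
  · have h1 := sin_ge_pi_sub hpi
    have h2 := Real.sin_le_one (2 * ω)
    linarith
  rcases le_or_gt (π / 2) ω with hp2 | hp2
  · -- sin 2ω ≤ 0, sin ω ≥ 0
    have h1 : Real.sin (2 * ω) ≤ 0 := sin_nonpos_of_pi_le (by linarith) (by linarith)
    have h2 : 0 ≤ Real.sin ω := Real.sin_nonneg_of_nonneg_of_le_pi (by linarith) hpi.le
    linarith
  · have hs0 : 0 ≤ Real.sin ω := Real.sin_nonneg_of_nonneg_of_le_pi (by linarith) (by linarith)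
    have hs1 : Real.sin ω ≤ 1 := Real.sin_le_one ω
    have e : Real.sin (2 * ω) = 2 * Real.sin ω * Real.cos ω := Real.sin_two_mul ω
    rcases le_or_gt 1.2 ω with h12 | h12
    · -- cos ω ≤ cos 1.2 ≤ 0.3791
      have hc : Real.cos ω ≤ Real.cos 1.2 :=
        Real.cos_le_cos_of_nonneg_of_le_pi (by norm_num) (by linarith) h12
      have hc2 : Real.cos ω ≤ 0.3791 := hc.trans c12_ub
      have hsc : Real.sin ω * Real.cos ω ≤ Real.sin ω * 0.3791 :=
        mul_le_mul_of_nonneg_left hc2 hs0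
      rw [e]; nlinarith
    · -- ω ∈ [1.1, 1.2]
      have hc : Real.cos ω ≤ Real.cos 1.1 :=
        Real.cos_le_cos_of_nonneg_of_le_pi (by norm_num) (by linarith) hω
      have hc2 : Real.cos ω ≤ 0.4559 := hc.trans c11_ub
      have hsu : Real.sin ω ≤ Real.sin 1.2 :=
        Real.sin_le_sin_of_le_of_le_pi_div_two (by linarith) (by linarith) h12.le
      have hsu2 : Real.sin ω ≤ 0.9439 := hsu.trans s12_ub
      have hsc : Real.sin ω * Real.cos ω ≤ Real.sin ω * 0.4559 :=
        mul_le_mul_of_nonneg_left hc2 hs0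
      rw [e]; nlinarith

lemma key3 (ω : ℝ) (hω : 1.1 ≤ ω) :
    0 < 8 * (ω / 2) + 2 * Real.sin ω - 2 * 3 * Real.sin (3 * ω) := by
  have hpi1 := Real.pi_gt_d6
  have hpi2 := Real.pi_lt_d2
  rcases le_or_gt ω 2.05 with h | h
  · have h1 : Real.sin (3 * ω) ≤ 0 := sin_nonpos_of_pi_le (by linarith) (by linarith)
    have h2 : 0 ≤ Real.sin ω := Real.sin_nonneg_of_nonneg_of_le_pi (by linarith) (by linarith)
    linarith
  · have h1 := Real.neg_one_le_sin ω
    have h2 := Real.sin_le_one (3 * ω)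
    linarith

lemma key4 (ω : ℝ) (hω : 1.1 ≤ ω) :
    0 < 15 * (ω / 2) + 2 * Real.sin ω - 2 * 4 * Real.sin (4 * ω) := by
  have hpi1 := Real.pi_gt_d6
  have hpi2 := Real.pi_lt_d2
  rcases le_or_gt ω 1.35 with h | h
  · have h1 : Real.sin (4 * ω) ≤ 0 := sin_nonpos_of_pi_le (by linarith) (by linarith)
    have h2 : 0 ≤ Real.sin ω := Real.sin_nonneg_of_nonneg_of_le_pi (by linarith) (by linarith)
    linarith
  · have h1 := Real.neg_one_le_sin ω
    have h2 := Real.sin_le_one (4 * ω)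
    linarith

lemma key5 (ω : ℝ) (hω : 1.1 ≤ ω) (K : ℝ) (hK : 5 ≤ K) :
    0 < (K ^ 2 - 1) * (ω / 2) + 2 * Real.sin ω - 2 * K * Real.sin (K * ω) := by
  have h1 := Real.neg_one_le_sin ω
  have h2 := Real.sin_le_one (K * ω)
  have h3 : 2 * K * Real.sin (K * ω) ≤ 2 * K := by nlinarith
  have hKsq : (0 : ℝ) ≤ K ^ 2 - 1 := by nlinarith
  have h4 : (K ^ 2 - 1) * (1.1 / 2) ≤ (K ^ 2 - 1) * (ω / 2) := by
    nlinarith [mul_nonneg hKsq (by linarith : (0 : ℝ) ≤ ω - 1.1)]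
  nlinarith [sq_nonneg (K - 5)]

lemma key (ω : ℝ) (hω : 1.1 ≤ ω) (k : ℕ) (hk : 2 ≤ k) :
    0 < ((k : ℝ) ^ 2 - 1) * (ω / 2) + 2 * Real.sin ω - 2 * k * Real.sin (k * ω) := by
  rcases lt_or_ge k 5 with h5 | h5
  · interval_cases k
    · have := key2 ω hω; push_cast; norm_num; linarith
    · have := key3 ω hω; push_cast; norm_num; linarith
    · have := key4 ω hω; push_cast; norm_num; linarith
  · exact key5 ω hω (k : ℝ) (by exact_mod_cast h5)

theorem g_one_lt_g_k (ω α : ℝ) (hω : 1.1 ≤ ω) (hα0 : 0 < α) (hα2 : α ≤ 2)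
    (k : ℕ) (hk : 2 ≤ k) :
    (1 - ω / α) ^ 2 + 2 * (ω / α) * (1 - Real.sin ω)
      < (1 - k * (ω / α)) ^ 2 + 2 * k * (ω / α) * (1 - Real.sin (k * ω)) := by
  set x := ω / α with hxdef
  have hω0 : (0 : ℝ) < ω := by linarith
  have hx0 : 0 < x := div_pos hω0 hα0
  have hx2 : ω / 2 ≤ x := by
    rw [hxdef]
    exact div_le_div_of_nonneg_left hω0.le hα0 hα2
  have hK2 : (2 : ℝ) ≤ (k : ℝ) := by exact_mod_cast hk
  have hkey := key ω hω k hk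
  have hinner : 0 < ((k : ℝ) ^ 2 - 1) * x + 2 * Real.sin ω - 2 * k * Real.sin (k * ω) := by
    have h3 : (3 : ℝ) ≤ (k : ℝ) ^ 2 - 1 := by nlinarith
    nlinarith
  nlinarith [mul_pos hx0 hinner]
end

section
/- Let α ∈ [1.5706, π/2] and let y be a slowly oscillating periodic solution of Wright's equation y'(t) = -α y(t-1)(1+y(t)) with ‖y‖_∞ ≤ e^{0.04} - 1, normalized so that y(0) = 0, y < 0 on (-t₋, 0) and y > 0 on (0, t₊). If t₊ ≥ 2, then t₊ < 2 + 1/α. -/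
/-!
On `(1, t₊)` both `y (t - 1)` and `y t` are positive, so Wright's equation makes `y` strictly
decreasing on `[1, t₊]`. If `t₊ ≥ 2 + 1/α` with `α ≥ 1`, then on `(2, 2 + 1/α)` the delayed
argument lies in `(1, 2)`, so `y (t - 1) > y 2` and `y' < -α y 2`. By the mean value theorem
`y` loses more than `y 2` over an interval of length `1/α`, so `y (2 + 1/α) < 0`, contradicting
`y ≥ 0` on `[0, t₊]`.
-/

open Set

lemma nonneg_on_Icc_of_pos_on_Ioo {f : ℝ → ℝ} (hf : Continuous f) {a b : ℝ} (hab : a < b)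
    (hpos : ∀ t ∈ Ioo a b, 0 < f t) : ∀ t ∈ Icc a b, 0 ≤ f t := by
  rw [← closure_Ioo hab.ne]
  exact (isClosed_le continuous_const hf).closure_subset_iff.mpr fun t ht => (hpos t ht).le

section Wright

variable {α : ℝ} {y : ℝ → ℝ} (hode : ∀ t, deriv y t = -α * y (t - 1) * (1 + y t))
include hode

lemma wright_deriv_lt (hα : 0 < α) {t c : ℝ} (hc : 0 ≤ c) (hct : c < y (t - 1))
    (hyt : 0 ≤ y t) : deriv y t < -α * c := by
  rw [hode t]
  nlinarith [mul_le_mul_of_nonneg_left hyt (mul_nonneg hα.le (hc.trans hct.le))]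

lemma wright_strictAntiOn_Icc_one (hα : 0 < α) (hy : Continuous y) {tp : ℝ}
    (hpos : ∀ t ∈ Ioo 0 tp, 0 < y t) : StrictAntiOn y (Icc 1 tp) := by
  refine strictAntiOn_of_deriv_neg (convex_Icc 1 tp) hy.continuousOn fun t ht => ?_
  rw [interior_Icc] at ht
  simpa using wright_deriv_lt hode hα le_rfl (hpos (t - 1) ⟨by linarith [ht.1], by linarith [ht.2]⟩)
    (hpos t ⟨by linarith [ht.1], ht.2⟩).le

lemma wright_two_add_inv_neg (hα : 1 ≤ α) (hy : Differentiable ℝ y) {tp : ℝ}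
    (hpos : ∀ t ∈ Ioo 0 tp, 0 < y t) (htp : 2 + 1 / α ≤ tp) : y (2 + 1 / α) < 0 := by
  have hα0 : 0 < α := by linarith
  have hinv : 0 < 1 / α := by positivity
  have hinv_le : 1 / α ≤ 1 := by rw [div_le_one hα0]; exact hα
  have hanti := wright_strictAntiOn_Icc_one hode hα0 hy.continuous hpos
  have hy2 : 0 < y 2 := hpos 2 ⟨two_pos, by linarith⟩
  obtain ⟨ξ, hξ, hslope⟩ := exists_deriv_eq_slope y (by linarith : (2 : ℝ) < 2 + 1 / α)
    hy.continuous.continuousOn hy.differentiableOn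
  have hdelay : y 2 < y (ξ - 1) :=
    hanti ⟨by linarith [hξ.1], by linarith [hξ.2]⟩ ⟨one_le_two, by linarith⟩ (by linarith [hξ.2])
  have hderiv := wright_deriv_lt hode hα0 hy2.le hdelay (hpos ξ ⟨by linarith [hξ.1], by linarith [hξ.2]⟩).le
  rw [hslope, add_sub_cancel_left, div_div_eq_mul_div, div_one] at hderiv
  nlinarith

end Wright

theorem sops_tplus_bound_general (α : ℝ) (hα0 : 1.5706 ≤ α)
    (y : ℝ → ℝ) (hy : ContDiff ℝ 1 y)
    (hode : ∀ t, deriv y t = -α * y (t - 1) * (1 + y t))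
    (tp : ℝ)
    (hpos : ∀ t ∈ Set.Ioo (0 : ℝ) tp, 0 < y t) :
    tp < 2 + 1 / α := by
  by_contra! htp
  have hdiff : Differentiable ℝ y := hy.differentiable one_ne_zero
  have hinv : 0 < 1 / α := by positivity
  have hneg := wright_two_add_inv_neg hode (by linarith) hdiff hpos htp
  have hnonneg := nonneg_on_Icc_of_pos_on_Ioo hdiff.continuous (by linarith) hpos
    (2 + 1 / α) ⟨by positivity, htp⟩
  linarith

/-- For a slowly oscillating periodic solution of Wright's equation with
`α ∈ [1.5706, π/2]` and `‖y‖_∞ ≤ e^{0.04} - 1`, normalized so that `y 0 = 0`,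
`y < 0` on `(-t₋, 0)` and `y > 0` on `(0, t₊)`: if `t₊ ≥ 2`, then `t₊ < 2 + 1/α`. -/
theorem sops_tplus_bound (α : ℝ) (hα0 : 1.5706 ≤ α) (hα1 : α ≤ Real.pi / 2)
    (y : ℝ → ℝ) (hy : ContDiff ℝ 1 y)
    (hode : ∀ t, deriv y t = -α * y (t - 1) * (1 + y t))
    (hbound : ∀ t, |y t| ≤ Real.exp 0.04 - 1)
    (tm tp : ℝ) (htm : 1 < tm) (htp : 1 < tp)
    (hper : Function.Periodic y (tm + tp))
    (hy0 : y 0 = 0)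
    (hneg : ∀ t ∈ Set.Ioo (-tm) (0 : ℝ), y t < 0)
    (hpos : ∀ t ∈ Set.Ioo (0 : ℝ) tp, 0 < y t)
    (h2 : 2 ≤ tp) :
    tp < 2 + 1 / α :=
  sops_tplus_bound_general α hα0 y hy hode tp hpos
end
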